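/- arXiv:2410.18728 — 5 statements merged into one kernel-verified Lean document; each statement's English description precedes it below -/
import Mathlib

section
/- Let α, β > 0 and define ω(u,v) = log((β/α²)·(cosh(α u) − cos(α v))) on the open set where cosh(α u) > cos(α v). Then ω satisfies the system ω_uu + ω_vv = 0 and ω_uv + ω_u·ω_v = 0. -/
/-- Partial derivative in the first variable. -/
noncomputable def Du (f : ℝ → ℝ → ℝ) : ℝ → ℝ → ℝ := fun u v => deriv (fun x => f x v) u

/-- Partial derivative in the second variable. -/
noncomputable def Dv (f : ℝ → ℝ → ℝ) : ℝ → ℝ → ℝ := fun u v => deriv (fun y => f u y) v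

/-!
With `c = β / α²`, `e^ω = c cosh (α u) - c cos (α v)` is a sum `F = p u + q v` of a function
of `u` and a function of `v`. For any such `ω = log F` one has `ω_u = p' / F`, `ω_v = q' / F`
and `ω_uv = - p' q' / F²`, so `ω_uv + ω_u ω_v = 0`, while
`ω_uu + ω_vv = ((p'' + q'') F - p'² - q'²) / F²`. For the cosh/cos pair this numerator is
`c² α² ((cosh² - cos²) - (sinh² + sin²)) = 0`.
-/

open Filter Topology

noncomputable def logSum (p q : ℝ → ℝ) : ℝ → ℝ → ℝ := fun u v => Real.log (p u + q v)

section LogSum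

variable {p q p' q' : ℝ → ℝ} {u v a b : ℝ}

theorem flip_logSum (p q : ℝ → ℝ) : flip (logSum p q) = logSum q p := by
  funext v u
  simp only [flip, logSum, add_comm]

theorem Du_logSum (hp : HasDerivAt p a u) (h : p u + q v ≠ 0) :
    Du (logSum p q) u v = a / (p u + q v) :=
  ((hp.add_const (q v)).log h).deriv

theorem Dv_logSum (hq : HasDerivAt q b v) (h : p u + q v ≠ 0) :
    Dv (logSum p q) u v = b / (p u + q v) := by
  change Du (flip (logSum p q)) v u = _
  rw [flip_logSum, add_comm]
  exact Du_logSum hq (by rwa [add_comm])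

theorem Du_Du_logSum (hp : ∀ x, HasDerivAt p (p' x) x) (hp' : HasDerivAt p' a u)
    (h : p u + q v ≠ 0) :
    Du (Du (logSum p q)) u v = (a * (p u + q v) - p' u ^ 2) / (p u + q v) ^ 2 := by
  have hnear : ∀ᶠ x in 𝓝 u, p x + q v ≠ 0 :=
    ((hp u).continuousAt.add continuousAt_const).eventually_ne h
  have hDu : (fun x => Du (logSum p q) x v) =ᶠ[𝓝 u] fun x => p' x / (p x + q v) :=
    hnear.mono fun x hx => Du_logSum (hp x) hx
  change deriv (fun x => Du (logSum p q) x v) u = _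
  rw [hDu.deriv_eq, (hp'.fun_div ((hp u).add_const (q v)) h).deriv, sq (p' u)]

theorem Dv_Dv_logSum (hq : ∀ y, HasDerivAt q (q' y) y) (hq' : HasDerivAt q' b v)
    (h : p u + q v ≠ 0) :
    Dv (Dv (logSum p q)) u v = (b * (p u + q v) - q' v ^ 2) / (p u + q v) ^ 2 := by
  change Du (Du (flip (logSum p q))) v u = _
  rw [flip_logSum, add_comm]
  exact Du_Du_logSum hq hq' (by rwa [add_comm])

theorem Dv_Du_logSum (hp : HasDerivAt p a u) (hq : HasDerivAt q b v) (h : p u + q v ≠ 0) :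
    Dv (Du (logSum p q)) u v = -(a * b) / (p u + q v) ^ 2 := by
  have hnear : ∀ᶠ y in 𝓝 v, p u + q y ≠ 0 :=
    (continuousAt_const.add hq.continuousAt).eventually_ne h
  have hDu : (fun y => Du (logSum p q) u y) =ᶠ[𝓝 v] fun y => a / (p u + q y) :=
    hnear.mono fun y hy => Du_logSum hp hy
  change deriv (fun y => Du (logSum p q) u y) v = _
  rw [hDu.deriv_eq, ((hasDerivAt_const v a).fun_div (hq.const_add (p u)) h).deriv]
  ring

theorem Dv_Du_logSum_add_Du_mul_Dv (hp : HasDerivAt p a u) (hq : HasDerivAt q b v)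
    (h : p u + q v ≠ 0) :
    Dv (Du (logSum p q)) u v + Du (logSum p q) u v * Dv (logSum p q) u v = 0 := by
  rw [Dv_Du_logSum hp hq h, Du_logSum hp h, Dv_logSum hq h]
  field_simp
  ring

end LogSum

theorem hasDerivAt_const_mul_cosh_mul (c α x : ℝ) :
    HasDerivAt (fun x => c * Real.cosh (α * x)) (c * α * Real.sinh (α * x)) x :=
  (((hasDerivAt_id' x).const_mul α).cosh.const_mul c).congr_deriv (by ring)

theorem hasDerivAt_const_mul_sinh_mul (c α x : ℝ) :
    HasDerivAt (fun x => c * Real.sinh (α * x)) (c * α * Real.cosh (α * x)) x :=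
  (((hasDerivAt_id' x).const_mul α).sinh.const_mul c).congr_deriv (by ring)

theorem hasDerivAt_neg_const_mul_cos_mul (c α x : ℝ) :
    HasDerivAt (fun x => -(c * Real.cos (α * x))) (c * α * Real.sin (α * x)) x :=
  (((hasDerivAt_id' x).const_mul α).cos.const_mul c).neg.congr_deriv (by ring)

theorem hasDerivAt_const_mul_sin_mul (c α x : ℝ) :
    HasDerivAt (fun x => c * Real.sin (α * x)) (c * α * Real.cos (α * x)) x :=
  (((hasDerivAt_id' x).const_mul α).sin.const_mul c).congr_deriv (by ring)

/-- For α, β > 0, ω(u,v) = log((β/α²)(cosh(αu) − cos(αv))) satisfies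
ω_uu + ω_vv = 0 and ω_uv + ω_u ω_v = 0 where cosh(αu) > cos(αv). -/
theorem stmt_5 (α β : ℝ) (hα : 0 < α) (hβ : 0 < β)
    (ω : ℝ → ℝ → ℝ)
    (hω : ∀ u v : ℝ, ω u v
      = Real.log ((β / α ^ 2) * (Real.cosh (α * u) - Real.cos (α * v)))) :
    ∀ u v : ℝ, Real.cos (α * v) < Real.cosh (α * u) →
      (Du (Du ω) u v + Dv (Dv ω) u v = 0) ∧
      (Dv (Du ω) u v + (Du ω u v) * (Dv ω u v) = 0) := by
  intro u v huv
  set c := β / α ^ 2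
  set p : ℝ → ℝ := fun x => c * Real.cosh (α * x)
  set q : ℝ → ℝ := fun y => -(c * Real.cos (α * y))
  have hω_eq : ω = logSum p q := by
    funext x y
    rw [hω, logSum, mul_sub, sub_eq_add_neg]
  have hF : p u + q v ≠ 0 := by
    rw [← sub_eq_add_neg, ← mul_sub]
    exact (mul_pos (by positivity) (sub_pos.mpr huv)).ne'
  subst hω_eq
  refine ⟨?_, Dv_Du_logSum_add_Du_mul_Dv (hasDerivAt_const_mul_cosh_mul c α u)
    (hasDerivAt_neg_const_mul_cos_mul c α v) hF⟩
  rw [Du_Du_logSum (hasDerivAt_const_mul_cosh_mul c α)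
      (hasDerivAt_const_mul_sinh_mul (c * α) α u) hF,
    Dv_Dv_logSum (hasDerivAt_neg_const_mul_cos_mul c α)
      (hasDerivAt_const_mul_sin_mul (c * α) α v) hF,
    ← add_div, div_eq_zero_iff]
  left
  linear_combination
    (c * α) ^ 2 * (Real.cosh_sq_sub_sinh_sq (α * u) - Real.sin_sq_add_cos_sq (α * v))
end

section
/- Suppose ω : Σ → ℝ is smooth on an open set Σ ⊆ ℝ² and satisfies both ω_uu + ω_vv = 0 and ω_uv + ω_u·ω_v = 0. Let f = ω_u·e^ω and g = ω_v·e^ω (functions of u alone and v alone respectively). Then e^ω·(f_u + g_v) = f² + g², i.e., wherever f_u + g_v ≠ 0 one has e^ω = (f² + g²)/(f_u + g_v). -/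
lemma slice_deriv_key {φ : ℝ → ℝ} (hφ : ContDiff ℝ (⊤ : ℕ∞) φ) (u : ℝ) :
    deriv (fun x => deriv φ x * Real.exp (φ x)) u
      = (deriv (deriv φ) u + (deriv φ u) ^ 2) * Real.exp (φ u) := by
  have hφ' : ContDiff ℝ (⊤:ℕ∞) (deriv φ) := (contDiff_infty_iff_deriv.mp (hφ.of_le (by simp))).2
  have h1 : HasDerivAt (deriv φ) (deriv (deriv φ) u) u :=
    ((hφ'.differentiable (by norm_num)) u).hasDerivAt
  have h2 : HasDerivAt (fun x => Real.exp (φ x)) (Real.exp (φ u) * deriv φ u) u :=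
    (((hφ.differentiable (by simp)) u).hasDerivAt).exp
  have : deriv (fun x => deriv φ x * Real.exp (φ x)) u = _ := (h1.mul h2).deriv
  rw [this]; ring

/-- If a smooth ω satisfies ω_uu + ω_vv = 0 and ω_uv + ω_u ω_v = 0 on an open
set Σ, and f = ω_u e^ω, g = ω_v e^ω, then e^ω (f_u + g_v) = f² + g² on Σ;
in particular e^ω = (f² + g²)/(f_u + g_v) wherever f_u + g_v ≠ 0. -/
theorem stmt_7 (S : Set (ℝ × ℝ)) (hSo : IsOpen S)
    (ω : ℝ → ℝ → ℝ)
    (hsmooth : ContDiff ℝ (⊤ : ℕ∞) (fun p : ℝ × ℝ => ω p.1 p.2))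
    (hpde1 : ∀ p ∈ S, Du (Du ω) p.1 p.2 + Dv (Dv ω) p.1 p.2 = 0)
    (hpde2 : ∀ p ∈ S, Dv (Du ω) p.1 p.2 + (Du ω p.1 p.2) * (Dv ω p.1 p.2) = 0)
    (f g : ℝ → ℝ → ℝ)
    (hf : ∀ u v : ℝ, f u v = Du ω u v * Real.exp (ω u v))
    (hg : ∀ u v : ℝ, g u v = Dv ω u v * Real.exp (ω u v)) :
    ∀ p ∈ S,
      Real.exp (ω p.1 p.2) * (Du f p.1 p.2 + Dv g p.1 p.2)
        = (f p.1 p.2) ^ 2 + (g p.1 p.2) ^ 2 ∧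
      (Du f p.1 p.2 + Dv g p.1 p.2 ≠ 0 →
        Real.exp (ω p.1 p.2)
          = ((f p.1 p.2) ^ 2 + (g p.1 p.2) ^ 2) / (Du f p.1 p.2 + Dv g p.1 p.2)) := by
  intro p hp
  obtain ⟨u, v⟩ := p
  simp only at *
  -- slices
  have hφ : ContDiff ℝ (⊤ : ℕ∞) (fun x => ω x v) :=
    hsmooth.comp (contDiff_id.prodMk contDiff_const)
  have hψ : ContDiff ℝ (⊤ : ℕ∞) (fun y => ω u y) :=
    hsmooth.comp (contDiff_const.prodMk contDiff_id)
  have hDuf : Du f u v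
      = (Du (Du ω) u v + (Du ω u v) ^ 2) * Real.exp (ω u v) := by
    have : Du f u v = deriv (fun x => deriv (fun x' => ω x' v) x
        * Real.exp ((fun x' => ω x' v) x)) u := by
      simp only [Du]
      congr 1
      funext x
      rw [hf]
      rfl
    rw [this, slice_deriv_key hφ]
    rfl
  have hDvg : Dv g u v
      = (Dv (Dv ω) u v + (Dv ω u v) ^ 2) * Real.exp (ω u v) := by
    have : Dv g u v = deriv (fun y => deriv (fun y' => ω u y') y
        * Real.exp ((fun y' => ω u y') y)) v := by
      simp only [Dv]
      congr 1
      funext y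
      rw [hg]
      rfl
    rw [this, slice_deriv_key hψ]
    rfl
  have key : Real.exp (ω u v) * (Du f u v + Dv g u v)
      = (f u v) ^ 2 + (g u v) ^ 2 := by
    rw [hDuf, hDvg, hf, hg]
    have h1 := hpde1 (u, v) hp
    simp only at h1
    have : Du (Du ω) u v = -(Dv (Dv ω) u v) := by linarith
    rw [this]
    ring
  refine ⟨key, fun hne => ?_⟩
  field_simp [← key]
  exact key
end

section
/- Suppose ω satisfies ω_uu + ω_vv = 0 and ω_uv + ω_u·ω_v = 0, with f = ω_u e^ω and g = ω_v e^ω satisfying f'' = α²f, (f')² = α²f² + β², g'' = −α²g, (g')² = −α²g² + β² (α > 0). Then e^{2ω}·ω_uv² + e^{2ω}·ω_uu² = β². In other words, the squared length of the axial direction w₁ equals β². -/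
/-- Under the PDE system and the ODEs for f = ω_u e^ω and g = ω_v e^ω, the
squared length of the axial direction satisfies
e^{2ω}(ω_uv² + ω_uu²) = β². -/
theorem stmt_11 (α β : ℝ) (hα : 0 < α)
    (ω : ℝ → ℝ → ℝ)
    (hsmooth : ContDiff ℝ (⊤ : ℕ∞) (fun p : ℝ × ℝ => ω p.1 p.2))
    (hpde1 : ∀ u v : ℝ, Du (Du ω) u v + Dv (Dv ω) u v = 0)
    (hpde2 : ∀ u v : ℝ, Dv (Du ω) u v + (Du ω u v) * (Dv ω u v) = 0)
    (f g : ℝ → ℝ → ℝ)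
    (hf : ∀ u v : ℝ, f u v = Du ω u v * Real.exp (ω u v))
    (hg : ∀ u v : ℝ, g u v = Dv ω u v * Real.exp (ω u v))
    (hode1 : ∀ u v : ℝ, Du (Du f) u v = α ^ 2 * f u v)
    (hode2 : ∀ u v : ℝ, (Du f u v) ^ 2 = α ^ 2 * (f u v) ^ 2 + β ^ 2)
    (hode3 : ∀ u v : ℝ, Dv (Dv g) u v = -(α ^ 2) * g u v)
    (hode4 : ∀ u v : ℝ, (Dv g u v) ^ 2 = -(α ^ 2) * (g u v) ^ 2 + β ^ 2) :
    ∀ u v : ℝ,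
      Real.exp (2 * ω u v) * (Dv (Du ω) u v) ^ 2
        + Real.exp (2 * ω u v) * (Du (Du ω) u v) ^ 2 = β ^ 2 := by
  intro u v
  set F : ℝ → ℝ := fun x => ω x v with hF
  set G : ℝ → ℝ := fun y => ω u y with hG
  have hFs : ContDiff ℝ (⊤ : ℕ∞) F := hsmooth.comp (contDiff_id.prodMk contDiff_const)
  have hGs : ContDiff ℝ (⊤ : ℕ∞) G := hsmooth.comp (contDiff_const.prodMk contDiff_id)
  have hFs' : ContDiff ℝ ((⊤ : ℕ∞) : WithTop ℕ∞) F := hFs.of_le (mod_cast le_top)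
  have hGs' : ContDiff ℝ ((⊤ : ℕ∞) : WithTop ℕ∞) G := hGs.of_le (mod_cast le_top)
  have hFd : Differentiable ℝ F := hFs'.differentiable (by norm_num)
  have hGd : Differentiable ℝ G := hGs'.differentiable (by norm_num)
  have hFd2 : Differentiable ℝ (deriv F) :=
    ((contDiff_infty_iff_deriv.mp hFs').2).differentiable (by norm_num)
  have hGd2 : Differentiable ℝ (deriv G) :=
    ((contDiff_infty_iff_deriv.mp hGs').2).differentiable (by norm_num)
  -- compute Du f
  have hprodF : (fun x => f x v) = fun x => deriv F x * Real.exp (F x) := by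
    funext x; rw [hf]; rfl
  have hDuf : Du f u v
      = deriv (deriv F) u * Real.exp (F u) + deriv F u * (Real.exp (F u) * deriv F u) := by
    have h := ((hFd2 u).hasDerivAt.mul ((hFd u).hasDerivAt.exp))
    show deriv (fun x => f x v) u = _
    rw [hprodF]
    exact h.deriv
  -- compute Dv g
  have hprodG : (fun y => g u y) = fun y => deriv G y * Real.exp (G y) := by
    funext y; rw [hg]; rfl
  have hDvg : Dv g u v
      = deriv (deriv G) v * Real.exp (G v) + deriv G v * (Real.exp (G v) * deriv G v) := by
    have h := ((hGd2 v).hasDerivAt.mul ((hGd v).hasDerivAt.exp))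
    show deriv (fun y => g u y) v = _
    rw [hprodG]
    exact h.deriv
  -- abbreviations
  have hAeq : Du (Du ω) u v = deriv (deriv F) u := rfl
  have hVVeq : Dv (Dv ω) u v = deriv (deriv G) v := rfl
  have hBeq : Du ω u v = deriv F u := rfl
  have hCeq : Dv ω u v = deriv G v := rfl
  have hEF : Real.exp (ω u v) = Real.exp (F u) := rfl
  have hEG : Real.exp (ω u v) = Real.exp (G v) := rfl
  set A := deriv (deriv F) u with hA
  set B := deriv F u with hB
  set C := deriv G v with hC
  set E := Real.exp (ω u v) with hE
  have hEpos : 0 < E := Real.exp_pos _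
  -- the two key algebraic equations
  have h1 : (A * E + B * (E * B)) ^ 2 = α ^ 2 * (B * E) ^ 2 + β ^ 2 := by
    have := hode2 u v
    rw [hDuf, hf u v, hBeq, ← hE] at this
    linarith [this]
  have hVV : deriv (deriv G) v = -A := by
    have := hpde1 u v
    rw [hAeq, hVVeq] at this; linarith
  have h2 : (-A * E + C * (E * C)) ^ 2 = -(α ^ 2) * (C * E) ^ 2 + β ^ 2 := by
    have := hode4 u v
    rw [hDvg, hg u v, hCeq, hVV, ← hE] at this
    linarith [this]
  -- mixed derivative
  have h3 : Dv (Du ω) u v = -(B * C) := by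
    have := hpde2 u v
    rw [hBeq, hCeq] at this; linarith
  -- goal rewriting
  have hexp2 : Real.exp (2 * ω u v) = E * E := by
    rw [two_mul, Real.exp_add]
  rw [hexp2, h3, hAeq]
  clear_value A B C E
  clear hA hB hC hE hAeq hBeq hCeq hEF hEG hVVeq hVV hDuf hDvg hprodF hprodG
  clear hFs hGs hFs' hGs' hFd hGd hFd2 hGd2 hsmooth hpde1 hpde2 hf hg hode1 hode2 hode3 hode4
  clear f g F G hF hG
  -- algebra
  rcases eq_or_ne (B ^ 2 + C ^ 2) 0 with hz | hnz
  · have hB0 : B = 0 := by nlinarith [sq_nonneg B, sq_nonneg C]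
    have hC0 : C = 0 := by nlinarith [sq_nonneg B, sq_nonneg C]
    rw [hB0] at h1
    rw [hB0, hC0]
    linear_combination h1
  · have hne : (B ^ 2 + C ^ 2) * E ^ 2 ≠ 0 := by
      apply mul_ne_zero hnz
      positivity
    have key : (2 * A + B ^ 2 - C ^ 2) = α ^ 2 := by
      apply mul_left_cancel₀ hne
      linear_combination h1 - h2
    linear_combination h1 - B ^ 2 * E ^ 2 * key
end

section
/- Write α = r cos θ, β = r sin θ with r > 0, θ ∈ (0, π/2), and define h̃_{(r,θ)}(z) = 2e^{2iθ}cos θ / (e^{−r cos θ · z}(cos θ + 1) − sin θ). Then lim_{θ→0⁺} h̃_{(r,θ)}(z) = e^{r z} for every z ∈ ℂ, and lim_{θ→π/2⁻} h̃_{(r,θ)}(z) = 2/(r z − 1) for every z with r z ≠ 1. -/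
/-! At `θ = 0` the quotient is continuous with nonvanishing denominator `2 e^{-rz}`, so the
limit is its value `e^{rz}`. At `θ = π/2` numerator and denominator both vanish, and a
complex-valued L'Hôpital rule (ratio of difference quotients) gives the limit as the ratio of
their derivatives there, `2 / (rz - 1)`. -/

open Filter Topology Complex

theorem HasDerivAt.tendsto_div_of_eq_zero {𝕜 𝕜' : Type*} [NontriviallyNormedField 𝕜]
    [NormedField 𝕜'] [NormedAlgebra 𝕜 𝕜'] {f g : 𝕜 → 𝕜'} {f' g' : 𝕜'} {a : 𝕜}
    (hf : HasDerivAt f f' a) (hg : HasDerivAt g g' a) (hfa : f a = 0) (hga : g a = 0)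
    (hg' : g' ≠ 0) : Tendsto (fun x => f x / g x) (𝓝[≠] a) (𝓝 (f' / g')) := by
  refine ((hasDerivAt_iff_tendsto_slope.mp hf).div
    (hasDerivAt_iff_tendsto_slope.mp hg) hg').congr' ?_
  filter_upwards [self_mem_nhdsWithin] with x hx
  have hx' : algebraMap 𝕜 𝕜' (x - a)⁻¹ ≠ 0 := by simpa [sub_eq_zero] using hx
  rw [Pi.div_apply, slope_def_module, slope_def_module, hfa, hga, sub_zero, sub_zero,
    Algebra.smul_def, Algebra.smul_def, mul_div_mul_left _ _ hx']

theorem hasDerivAt_two_mul_cexp_mul_cos_pi_div_two :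
    HasDerivAt (fun θ : ℝ => 2 * exp (2 * I * θ) * (Real.cos θ : ℂ)) 2 (Real.pi / 2) := by
  have hexpθ := ((hasDerivAt_id (Real.pi / 2)).ofReal_comp.const_mul (2 * I)).cexp
  have h := (hexpθ.const_mul 2).mul (Real.hasDerivAt_cos (Real.pi / 2)).ofReal_comp
  have hexp : exp (2 * I * (Real.pi / 2)) = -1 := by
    rw [← exp_pi_mul_I]; ring_nf
  refine h.congr_deriv ?_
  simp [hexp]

theorem hasDerivAt_cexp_mul_cos_sub_sin_pi_div_two (r : ℝ) (z : ℂ) :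
    HasDerivAt (fun θ : ℝ => exp (-(r * (Real.cos θ : ℂ)) * z) * ((Real.cos θ : ℂ) + 1)
      - (Real.sin θ : ℂ)) (r * z - 1) (Real.pi / 2) := by
  have hcos := (Real.hasDerivAt_cos (Real.pi / 2)).ofReal_comp
  have h := ((((hcos.const_mul (r : ℂ)).neg.mul_const z).cexp).mul (hcos.add_const 1)).sub
    (Real.hasDerivAt_sin (Real.pi / 2)).ofReal_comp
  refine h.congr_deriv ?_
  simp [sub_eq_add_neg]

theorem stmt_18_general (r : ℝ)
    (h : ℝ → ℂ → ℂ)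
    (hh : ∀ θ : ℝ, ∀ z : ℂ, h θ z
      = 2 * Complex.exp (2 * Complex.I * (θ : ℂ)) * (Real.cos θ : ℂ)
        / (Complex.exp (-((r : ℂ) * (Real.cos θ : ℂ)) * z) * ((Real.cos θ : ℂ) + 1)
            - (Real.sin θ : ℂ))) :
    (∀ z : ℂ,
      Tendsto (fun θ : ℝ => h θ z) (𝓝[>] 0) (𝓝 (Complex.exp ((r : ℂ) * z)))) ∧
    (∀ z : ℂ, (r : ℂ) * z ≠ 1 →
      Tendsto (fun θ : ℝ => h θ z) (𝓝[<] (Real.pi / 2))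
        (𝓝 (2 / ((r : ℂ) * z - 1)))) := by
  simp only [hh]
  refine ⟨fun z => ?_, fun z hz => ?_⟩
  · have hcont : ContinuousAt (fun θ : ℝ => 2 * exp (2 * I * θ) * (Real.cos θ : ℂ)
        / (exp (-(r * (Real.cos θ : ℂ)) * z) * ((Real.cos θ : ℂ) + 1)
          - (Real.sin θ : ℂ))) 0 :=
      ContinuousAt.div (by fun_prop) (by fun_prop) (by simp)
    convert hcont.tendsto.mono_left nhdsWithin_le_nhds using 2
    field_simp
    simp [exp_neg, one_add_one_eq_two]
  · exact (hasDerivAt_two_mul_cexp_mul_cos_pi_div_two.tendsto_div_of_eq_zero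
      (hasDerivAt_cexp_mul_cos_sub_sin_pi_div_two r z) (by simp) (by simp)
      (sub_ne_zero.mpr hz)).mono_left (nhdsLT_le_nhdsNE _)

/-- The Weierstrass data h̃_{(r,θ)}(z) = 2e^{2iθ}cosθ / (e^{−r cosθ z}(cosθ+1) − sinθ)
interpolates between the catenoid data e^{rz} (θ → 0⁺) and the Enneper-type
data 2/(rz − 1) (θ → (π/2)⁻). -/
theorem stmt_18 (r : ℝ) (hr : 0 < r)
    (h : ℝ → ℂ → ℂ)
    (hh : ∀ θ : ℝ, ∀ z : ℂ, h θ z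
      = 2 * Complex.exp (2 * Complex.I * (θ : ℂ)) * (Real.cos θ : ℂ)
        / (Complex.exp (-((r : ℂ) * (Real.cos θ : ℂ)) * z) * ((Real.cos θ : ℂ) + 1)
            - (Real.sin θ : ℂ))) :
    (∀ z : ℂ,
      Tendsto (fun θ : ℝ => h θ z) (𝓝[>] 0) (𝓝 (Complex.exp ((r : ℂ) * z)))) ∧
    (∀ z : ℂ, (r : ℂ) * z ≠ 1 →
      Tendsto (fun θ : ℝ => h θ z) (𝓝[<] (Real.pi / 2))
        (𝓝 (2 / ((r : ℂ) * z - 1)))) :=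
  stmt_18_general r h hh
end

section
/- Let P₁(v) and P₂(u) be parametrized by the matrices P_{e₁}(v) and P_{e₂}(u) given explicitly by P_{e₁}(v) = [[1+v²/2,0,v,−v²/2],[0,1,0,0],[−v,0,−1,v],[v²/2,0,v,1−v²/2]] and P_{e₂}(u) = [[1+u²/2,−u,0,−u²/2],[u,−1,0,−u],[0,0,1,0],[u²/2,−u,0,1−u²/2]]. Then each matrix preserves the Minkowski bilinear form of signature (−,+,+,+) on ℝ^{3,1} and fixes the null vector 𝔭 = (1,0,0,1)ᵗ; moreover, with the action X ↦ P(X + r·𝔭̃) − r·𝔭̃ where 𝔭̃ = (−1/2,0,0,1/2)ᵗ, one has P_{e₂,1}(u) ∘ P_{e₁,−1}(v) applied to the origin equals −((u²−v²)/2, u, v, (u²−v²)/2)ᵗ. -/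
/-- Minkowski bilinear form of signature (−,+,+,+) on ℝ⁴. -/
noncomputable def mink (x y : Fin 4 → ℝ) : ℝ := -(x 0 * y 0) + x 1 * y 1 + x 2 * y 2 + x 3 * y 3

/-- The null vector 𝔭. -/
noncomputable def pvec : Fin 4 → ℝ := ![1, 0, 0, 1]

/-- The dual null vector 𝔭̃. -/
noncomputable def ptil : Fin 4 → ℝ := ![-(1 / 2 : ℝ), 0, 0, 1 / 2]

/-- The parabolic rotation matrix P_{e₁}(v). -/
noncomputable def P1 (v : ℝ) : Matrix (Fin 4) (Fin 4) ℝ :=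
  !![1 + v ^ 2 / 2, 0, v, -(v ^ 2 / 2);
     0, 1, 0, 0;
     -v, 0, -1, v;
     v ^ 2 / 2, 0, v, 1 - v ^ 2 / 2]

/-- The parabolic rotation matrix P_{e₂}(u). -/
noncomputable def P2 (u : ℝ) : Matrix (Fin 4) (Fin 4) ℝ :=
  !![1 + u ^ 2 / 2, -u, 0, -(u ^ 2 / 2);
     u, -1, 0, -u;
     0, 0, 1, 0;
     u ^ 2 / 2, -u, 0, 1 - u ^ 2 / 2]

/-- The action X ↦ P(X + r𝔭̃) − r𝔭̃. -/
noncomputable def act (P : Matrix (Fin 4) (Fin 4) ℝ) (r : ℝ) (X : Fin 4 → ℝ) : Fin 4 → ℝ :=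
  P.mulVec (X + r • ptil) - r • ptil

/-- P_{e₁}(v) and P_{e₂}(u) preserve the Minkowski form, fix 𝔭, and the
composed parabolic rotations applied to the origin trace out the trivial
Enneper-type surface. -/
theorem stmt_19 (u v : ℝ) :
    (∀ x y : Fin 4 → ℝ, mink ((P1 v).mulVec x) ((P1 v).mulVec y) = mink x y) ∧
    (∀ x y : Fin 4 → ℝ, mink ((P2 u).mulVec x) ((P2 u).mulVec y) = mink x y) ∧
    (P1 v).mulVec pvec = pvec ∧
    (P2 u).mulVec pvec = pvec ∧
    act (P2 u) 1 (act (P1 v) (-1) 0)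
      = ![-((u ^ 2 - v ^ 2) / 2), -u, -v, -((u ^ 2 - v ^ 2) / 2)] := by
  refine ⟨fun x y => ?_, fun x y => ?_, ?_, ?_, ?_⟩
  · simp [mink, P1, Matrix.mulVec, dotProduct, Fin.sum_univ_four]; ring
  · simp [mink, P2, Matrix.mulVec, dotProduct, Fin.sum_univ_four]; ring
  · funext i; fin_cases i <;>
      simp [P1, pvec, Matrix.mulVec, dotProduct, Fin.sum_univ_four] <;> ring
  · funext i; fin_cases i <;>
      simp [P2, pvec, Matrix.mulVec, dotProduct, Fin.sum_univ_four] <;> ring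
  · funext i; fin_cases i <;>
      simp only [act, P1, P2, ptil, Matrix.mulVec, dotProduct, Fin.sum_univ_four,
        Pi.add_apply, Pi.sub_apply, Pi.smul_apply, Pi.zero_apply, smul_eq_mul,
        Matrix.of_apply, Matrix.cons_val', Matrix.cons_val_zero, Matrix.cons_val_one,
        Matrix.head_cons, Matrix.empty_val', Matrix.cons_val_fin_one, Matrix.head_fin_const,
        Fin.isValue, Matrix.cons_val_two, Matrix.tail_cons, Matrix.cons_val_three] <;> norm_num <;> ring
end
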